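/- For ν > 0, let f_ν(x) = Γ((ν+1)/2)/(√(νπ)·Γ(ν/2)) · (1 + x²/ν)^{−(ν+1)/2} denote the Student t density with ν degrees of freedom, where Γ is the Gamma function. Define the asymptotic relative efficiency of optimal-score generalized rank regression with respect to Wilcoxon rank regression under t_ν noise as ARE(ν) = I(f_ν) / (12·(∫_ℝ f_ν(x)² dx)²), where I(f_ν) = ∫_ℝ (f_ν′(x)/f_ν(x))² f_ν(x) dx is the Fisher information for location. Then ARE(ν) → ∞ as ν → 0⁺. -/

import Mathlib

/-!
Write `C ν` for the normalizing constant of `t_ν` and `t = √ν · C ν`; since `Γ(ν/2)` has a pole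
at `0`, `t → 0` as `ν → 0⁺`. On the window `√ν ≤ x ≤ 2√ν` the score `(ν+1)x/(ν+x²)` has size
`ν^{-1/2}` and the density is at least `C ν / 5`, so `I(f_ν) ≥ t / (125 ν)`. Bounding `f_ν²` by
`C ν² (1 + x²/ν)⁻¹` gives `∫ f_ν² ≤ π t² / √ν`. Together, `ARE ν ≥ 1 / (1500 π² t³) → ∞`.
-/

open MeasureTheory Filter

/-- The Student t density with `ν` degrees of freedom. -/
noncomputable def studentTDensity (ν : ℝ) (x : ℝ) : ℝ :=
  Real.Gamma ((ν + 1) / 2) / (Real.sqrt (ν * Real.pi) * Real.Gamma (ν / 2)) *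
    (1 + x ^ 2 / ν) ^ (-((ν + 1) / 2))

/-- Fisher information for location of a density `f`. -/
noncomputable def fisherInfo (f : ℝ → ℝ) : ℝ :=
  ∫ x : ℝ, (deriv f x / f x) ^ 2 * f x

/-- Asymptotic relative efficiency of optimal-score GRR with respect to Wilcoxon rank
regression under Student `t_ν` noise. -/
noncomputable def ARE (ν : ℝ) : ℝ :=
  fisherInfo (studentTDensity ν) /
    (12 * (∫ x : ℝ, (studentTDensity ν x) ^ 2) ^ 2)

open Real
open scoped Topology

noncomputable def studentTConst (ν : ℝ) : ℝ :=
  Gamma ((ν + 1) / 2) / (√(ν * π) * Gamma (ν / 2))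

noncomputable def studentTScore (ν x : ℝ) : ℝ := (ν + 1) * x / (ν + x ^ 2)

theorem continuousAt_Gamma_of_pos {s : ℝ} (hs : 0 < s) : ContinuousAt Gamma s :=
  (differentiableAt_Gamma fun m => ((neg_nonpos.2 m.cast_nonneg).trans_lt hs).ne').continuousAt

section StudentT

variable {ν : ℝ}

theorem studentTDensity_eq (x : ℝ) :
    studentTDensity ν x = studentTConst ν * (1 + x ^ 2 / ν) ^ (-((ν + 1) / 2)) := rfl

theorem studentTConst_pos (hν : 0 < ν) : 0 < studentTConst ν := by
  unfold studentTConst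
  have := Gamma_pos_of_pos (by linarith : 0 < (ν + 1) / 2)
  have := Gamma_pos_of_pos (by linarith : 0 < ν / 2)
  have := sqrt_pos.2 (mul_pos hν pi_pos)
  positivity

theorem one_le_one_add_sq_div (hν : 0 < ν) (x : ℝ) : 1 ≤ 1 + x ^ 2 / ν := by
  have := div_nonneg (sq_nonneg x) hν.le
  linarith

theorem one_add_sq_div_pos (hν : 0 < ν) (x : ℝ) : 0 < 1 + x ^ 2 / ν :=
  zero_lt_one.trans_le (one_le_one_add_sq_div hν x)

theorem studentTDensity_pos (hν : 0 < ν) (x : ℝ) : 0 < studentTDensity ν x :=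
  mul_pos (studentTConst_pos hν) (rpow_pos_of_pos (one_add_sq_div_pos hν x) _)

theorem hasDerivAt_studentTDensity (hν : 0 < ν) (x : ℝ) :
    HasDerivAt (studentTDensity ν) (studentTConst ν *
      (2 * x / ν * -((ν + 1) / 2) * (1 + x ^ 2 / ν) ^ (-((ν + 1) / 2) - 1))) x := by
  have hbase : HasDerivAt (fun x : ℝ => 1 + x ^ 2 / ν) (2 * x / ν) x := by
    simpa using ((hasDerivAt_pow 2 x).div_const ν).const_add 1
  exact (hbase.rpow_const (Or.inl (one_add_sq_div_pos hν x).ne')).const_mul _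

theorem continuous_studentTDensity (hν : 0 < ν) : Continuous (studentTDensity ν) :=
  continuous_iff_continuousAt.2 fun x => (hasDerivAt_studentTDensity hν x).continuousAt

theorem deriv_div_studentTDensity (hν : 0 < ν) (x : ℝ) :
    deriv (studentTDensity ν) x / studentTDensity ν x = -studentTScore ν x := by
  have hb := one_add_sq_div_pos hν x
  have hr := (rpow_pos_of_pos hb (-((ν + 1) / 2))).ne'
  have hC := (studentTConst_pos hν).ne'
  rw [(hasDerivAt_studentTDensity hν x).deriv, studentTDensity_eq, studentTScore, rpow_sub hb,
    rpow_one]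
  field_simp

theorem integrable_studentTDensity (hν : 0 < ν) : Integrable (studentTDensity ν) := by
  have hg : Integrable fun u : ℝ => (1 + ‖u‖ ^ 2) ^ (-(ν + 1) / 2) :=
    integrable_rpow_neg_one_add_norm_sq (by simpa using hν)
  refine ((hg.comp_div (sqrt_pos.2 hν).ne').const_mul (studentTConst ν)).congr
    (Eventually.of_forall fun x => ?_)
  simp only [studentTDensity_eq, norm_div, Real.norm_eq_abs, div_pow, sq_abs,
    sq_sqrt hν.le, abs_of_nonneg (sqrt_nonneg ν), neg_div]

theorem studentTDensity_sq_le (hν : 0 < ν) (x : ℝ) :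
    studentTDensity ν x ^ 2 ≤ studentTConst ν ^ 2 * (1 + (x / √ν) ^ 2)⁻¹ := by
  have hb := one_le_one_add_sq_div hν x
  rw [div_pow, sq_sqrt hν.le, studentTDensity_eq, mul_pow,
    ← rpow_mul_natCast (zero_le_one.trans hb), ← rpow_neg_one]
  gcongr
  push_cast
  linarith

theorem integrable_studentTDensity_sq (hν : 0 < ν) :
    Integrable fun x => studentTDensity ν x ^ 2 := by
  refine ((integrable_inv_one_add_sq.comp_div (sqrt_pos.2 hν).ne').const_mul
    (studentTConst ν ^ 2)).mono' ((continuous_studentTDensity hν).pow 2).aestronglyMeasurable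
    (Eventually.of_forall fun x => ?_)
  rw [Real.norm_of_nonneg (sq_nonneg _)]
  exact studentTDensity_sq_le hν x

theorem integral_studentTDensity_sq_pos (hν : 0 < ν) :
    0 < ∫ x, studentTDensity ν x ^ 2 := by
  refine integral_pos_of_integrable_nonneg_nonzero (x := 0) ((continuous_studentTDensity hν).pow 2)
    (integrable_studentTDensity_sq hν) (fun x => sq_nonneg _) ?_
  exact pow_ne_zero 2 (studentTDensity_pos hν 0).ne'

theorem integral_studentTDensity_sq_le (hν : 0 < ν) :
    ∫ x, studentTDensity ν x ^ 2 ≤ studentTConst ν ^ 2 * (√ν * π) := by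
  calc ∫ x, studentTDensity ν x ^ 2
      ≤ ∫ x, studentTConst ν ^ 2 * (1 + (x / √ν) ^ 2)⁻¹ :=
        integral_mono (integrable_studentTDensity_sq hν)
          ((integrable_inv_one_add_sq.comp_div (sqrt_pos.2 hν).ne').const_mul _)
          (studentTDensity_sq_le hν)
    _ = studentTConst ν ^ 2 * (√ν * π) := by
      rw [integral_const_mul, Measure.integral_comp_div (fun x : ℝ => (1 + x ^ 2)⁻¹),
        integral_univ_inv_one_add_sq, smul_eq_mul, abs_of_nonneg (sqrt_nonneg ν)]

theorem fisherInfo_studentTDensity (hν : 0 < ν) :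
    fisherInfo (studentTDensity ν) = ∫ x, studentTScore ν x ^ 2 * studentTDensity ν x := by
  unfold fisherInfo
  simp only [deriv_div_studentTDensity hν, neg_sq]

theorem studentTScore_sq_le (hν : 0 < ν) (x : ℝ) :
    studentTScore ν x ^ 2 ≤ (ν + 1) ^ 2 / (4 * ν) := by
  rw [studentTScore, div_pow, div_le_div_iff₀ (by positivity) (by positivity)]
  nlinarith [sq_nonneg (ν - x ^ 2), sq_nonneg x, sq_nonneg ((ν + 1) * (ν - x ^ 2))]

theorem integrable_studentTScore_sq_mul_studentTDensity (hν : 0 < ν) :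
    Integrable fun x => studentTScore ν x ^ 2 * studentTDensity ν x := by
  have hcont : Continuous fun x => studentTScore ν x ^ 2 * studentTDensity ν x := by
    unfold studentTScore
    exact ((by fun_prop : Continuous fun x : ℝ => (ν + 1) * x).div (by fun_prop)
      (fun x => by positivity)).pow 2 |>.mul (continuous_studentTDensity hν)
  refine ((integrable_studentTDensity hν).const_mul ((ν + 1) ^ 2 / (4 * ν))).mono'
    hcont.aestronglyMeasurable (Eventually.of_forall fun x => ?_)
  have hf := (studentTDensity_pos hν x).le
  rw [Real.norm_of_nonneg (by positivity)]
  exact mul_le_mul_of_nonneg_right (studentTScore_sq_le hν x) hf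

theorem inv_le_studentTScore_sq {x : ℝ} (hν : 0 < ν) (hlo : ν ≤ x ^ 2) (hhi : x ^ 2 ≤ 4 * ν) :
    (25 * ν)⁻¹ ≤ studentTScore ν x ^ 2 := by
  have hnum : ν ≤ ((ν + 1) * x) ^ 2 := by
    nlinarith [mul_nonneg (by positivity : 0 ≤ ν ^ 2 + 2 * ν) (sq_nonneg x)]
  have hden : (ν + x ^ 2) ^ 2 ≤ (5 * ν) ^ 2 := by gcongr; linarith
  calc (25 * ν)⁻¹ = ν / (5 * ν) ^ 2 := by field_simp; ring
    _ ≤ ((ν + 1) * x) ^ 2 / (ν + x ^ 2) ^ 2 := by gcongr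
    _ = studentTScore ν x ^ 2 := by rw [studentTScore, div_pow]

theorem studentTConst_div_le_studentTDensity (hν : 0 < ν) (hν1 : ν ≤ 1) (x : ℝ) :
    studentTConst ν / (1 + x ^ 2 / ν) ≤ studentTDensity ν x := by
  rw [studentTDensity_eq, div_eq_mul_inv, ← rpow_neg_one]
  exact mul_le_mul_of_nonneg_left
    (rpow_le_rpow_of_exponent_le (one_le_one_add_sq_div hν x) (by linarith))
    (studentTConst_pos hν).le

theorem sqrt_mul_studentTConst_div_le_fisherInfo (hν : 0 < ν) (hν1 : ν ≤ 1) :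
    √ν * studentTConst ν / (125 * ν) ≤ fisherInfo (studentTDensity ν) := by
  have hint := integrable_studentTScore_sq_mul_studentTDensity hν
  have hbound : ∀ x ∈ Set.Icc (√ν) (2 * √ν),
      studentTConst ν / (125 * ν) ≤ studentTScore ν x ^ 2 * studentTDensity ν x := by
    rintro x ⟨hx₁, hx₂⟩
    have hC := studentTConst_pos hν
    have hs := sq_sqrt hν.le
    have hlo : ν ≤ x ^ 2 := by nlinarith [sqrt_nonneg ν]
    have hhi : x ^ 2 ≤ 4 * ν := by nlinarith [sqrt_nonneg ν]
    have hbase : 1 + x ^ 2 / ν ≤ 5 := by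
      rw [add_comm, ← le_sub_iff_add_le, div_le_iff₀ hν]
      linarith
    calc studentTConst ν / (125 * ν) = (25 * ν)⁻¹ * (studentTConst ν / 5) := by
          field_simp; ring
      _ ≤ studentTScore ν x ^ 2 * (studentTConst ν / (1 + x ^ 2 / ν)) := by
          gcongr
          exact inv_le_studentTScore_sq hν hlo hhi
      _ ≤ studentTScore ν x ^ 2 * studentTDensity ν x := by
          gcongr
          exact studentTConst_div_le_studentTDensity hν hν1 x
  calc √ν * studentTConst ν / (125 * ν)
      = studentTConst ν / (125 * ν) * volume.real (Set.Icc (√ν) (2 * √ν)) := by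
        rw [Real.volume_real_Icc_of_le (by linarith [sqrt_nonneg ν])]
        ring
    _ ≤ ∫ x in Set.Icc (√ν) (2 * √ν), studentTScore ν x ^ 2 * studentTDensity ν x :=
        setIntegral_ge_of_const_le_real measurableSet_Icc measure_Icc_lt_top.ne hbound
          hint.integrableOn
    _ ≤ ∫ x, studentTScore ν x ^ 2 * studentTDensity ν x :=
        setIntegral_le_integral hint (Eventually.of_forall fun x =>
          mul_nonneg (sq_nonneg _) (studentTDensity_pos hν x).le)
    _ = fisherInfo (studentTDensity ν) := (fisherInfo_studentTDensity hν).symm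

theorem inv_sqrt_mul_studentTConst_pow_three_le_ARE (hν : 0 < ν) (hν1 : ν ≤ 1) :
    (1500 * π ^ 2)⁻¹ * ((√ν * studentTConst ν)⁻¹) ^ 3 ≤ ARE ν := by
  have hC := studentTConst_pos hν
  have hs := sqrt_pos.2 hν
  have hDpos := integral_studentTDensity_sq_pos hν
  have hI := sqrt_mul_studentTConst_div_le_fisherInfo hν hν1
  have hDle := integral_studentTDensity_sq_le hν
  calc (1500 * π ^ 2)⁻¹ * ((√ν * studentTConst ν)⁻¹) ^ 3
      = √ν * studentTConst ν / (125 * ν) / (12 * (studentTConst ν ^ 2 * (√ν * π)) ^ 2) := by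
        have hsq := sq_sqrt hν.le
        generalize √ν = s at hs hsq ⊢
        subst hsq
        field_simp
        norm_num
    _ ≤ ARE ν := by
        unfold ARE
        gcongr
        exact (by positivity : (0 : ℝ) ≤ _).trans hI

theorem sqrt_mul_studentTConst (hν : 0 < ν) :
    √ν * studentTConst ν = ν * Gamma ((ν + 1) / 2) / (2 * √π * Gamma (ν / 2 + 1)) := by
  have hΓ := (Gamma_pos_of_pos (by linarith : 0 < ν / 2)).ne'
  have hs := (sqrt_pos.2 hν).ne'
  have hπ := (sqrt_pos.2 pi_pos).ne'
  rw [studentTConst, Gamma_add_one (by positivity), sqrt_mul hν.le]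
  field_simp

theorem tendsto_sqrt_mul_studentTConst_nhdsGT_zero :
    Tendsto (fun ν => √ν * studentTConst ν) (𝓝[>] 0) (𝓝[>] 0) := by
  have hcont : ContinuousAt
      (fun ν => ν * Gamma ((ν + 1) / 2) / (2 * √π * Gamma (ν / 2 + 1))) 0 := by
    refine ContinuousAt.div (continuousAt_id.mul ?_) (continuousAt_const.mul ?_) ?_
    · exact (continuousAt_Gamma_of_pos (by norm_num : (0 : ℝ) < 1 / 2)).comp_of_eq
        (by fun_prop) (by norm_num)
    · exact (continuousAt_Gamma_of_pos one_pos).comp_of_eq (by fun_prop) (by norm_num)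
    · have := (sqrt_pos.2 pi_pos).ne'
      simp [this]
  have hlim := hcont.tendsto
  rw [zero_mul, zero_div] at hlim
  refine tendsto_nhdsWithin_iff.2 ⟨?_, eventually_nhdsWithin_of_forall fun ν hν =>
    mul_pos (sqrt_pos.2 hν) (studentTConst_pos hν)⟩
  exact (hlim.mono_left nhdsWithin_le_nhds).congr'
    (eventually_nhdsWithin_of_forall fun ν hν => (sqrt_mul_studentTConst hν).symm)

end StudentT

/-- Proposition S1 / Remark 2: the asymptotic relative efficiency of optimal-score GRR
with respect to Wilcoxon rank regression under Student `t_ν` noise tends to infinity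
as `ν → 0⁺`. -/
theorem are_tendsto_atTop_as_dof_to_zero :
    Tendsto ARE (nhdsWithin 0 (Set.Ioi (0:ℝ))) atTop := by
  have hbound : ∀ᶠ ν in 𝓝[>] 0,
      (1500 * π ^ 2)⁻¹ * ((√ν * studentTConst ν)⁻¹) ^ 3 ≤ ARE ν := by
    filter_upwards [Ioc_mem_nhdsGT one_pos] with ν hν
    exact inv_sqrt_mul_studentTConst_pow_three_le_ARE hν.1 hν.2
  refine tendsto_atTop_mono' _ hbound (Tendsto.const_mul_atTop (by positivity) ?_)
  exact (tendsto_pow_atTop three_ne_zero).comp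
    (tendsto_inv_nhdsGT_zero.comp tendsto_sqrt_mul_studentTConst_nhdsGT_zero)
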